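/- arXiv:1407.5373 — 2 statements merged into one kernel-verified Lean document; each statement's English description precedes it below -/
import Mathlib

section
/- The harmonic-number bound between social welfare and fixed-price revenue is tight: if Pr[v ≥ t] = 1/t for all integers 1 ≤ t ≤ v*, then E[v] = H_{v*} and max_{1 ≤ t ≤ v*} t · Pr[v ≥ t] = 1, so the ratio of social welfare to optimal fixed-price revenue is exactly H_{v*}. -/
/-! Summing the tails `Pr[v ≥ t]` over `t` counts each atom `u` exactly `u` times, so
`E[v] = ∑_t Pr[v ≥ t] = ∑_t 1/t = H_V`; and every price `t` earns `t · (1/t) = 1`. -/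

open Finset

theorem Finset.sum_Icc_natCast_mul_eq_sum_tails {R : Type*} [NonAssocSemiring R]
    (n : ℕ) (f : ℕ → R) :
    ∑ t ∈ Icc 1 n, (t : R) * f t = ∑ t ∈ Icc 1 n, ∑ u ∈ Icc t n, f u := by
  calc ∑ t ∈ Icc 1 n, (t : R) * f t
      = ∑ u ∈ Icc 1 n, ∑ _t ∈ Icc 1 u, f u := by
        refine sum_congr rfl fun u _ => ?_
        rw [sum_const, Nat.card_Icc, nsmul_eq_mul, Nat.add_sub_cancel]
    _ = ∑ t ∈ Icc 1 n, ∑ u ∈ Icc t n, f u :=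
        sum_comm' fun u t => by simp only [mem_Icc]; omega

theorem Finset.sup'_eq_of_forall_eq {α β : Type*} [SemilatticeSup α] {s : Finset β}
    (H : s.Nonempty) {f : β → α} {a : α} (hf : ∀ b ∈ s, f b = a) : s.sup' H f = a := by
  rw [sup'_congr H rfl hf, sup'_const]

theorem stmt3_general (V : ℕ) (hV : 1 ≤ V) (f : ℕ → ℝ)
    (htail : ∀ t ∈ Finset.Icc 1 V, (∑ u ∈ Finset.Icc t V, f u) = 1 / (t:ℝ)) :
    (∑ t ∈ Finset.Icc 1 V, (t:ℝ) * f t) = (∑ i ∈ Finset.Icc 1 V, (1:ℝ)/i) ∧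
    (Finset.Icc 1 V).sup' (Finset.nonempty_Icc.mpr hV)
        (fun t => (t:ℝ) * ∑ u ∈ Finset.Icc t V, f u) = 1 ∧
    (∑ t ∈ Finset.Icc 1 V, (t:ℝ) * f t) /
      (Finset.Icc 1 V).sup' (Finset.nonempty_Icc.mpr hV)
        (fun t => (t:ℝ) * ∑ u ∈ Finset.Icc t V, f u)
      = (∑ i ∈ Finset.Icc 1 V, (1:ℝ)/i) := by
  have hwelfare : ∑ t ∈ Icc 1 V, (t : ℝ) * f t = ∑ i ∈ Icc 1 V, (1 : ℝ) / i := by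
    rw [sum_Icc_natCast_mul_eq_sum_tails]
    exact sum_congr rfl htail
  have hrevenue : (Icc 1 V).sup' (nonempty_Icc.mpr hV)
      (fun t => (t : ℝ) * ∑ u ∈ Icc t V, f u) = 1 := by
    refine sup'_eq_of_forall_eq _ fun t ht => ?_
    have ht0 : (t : ℝ) ≠ 0 := by
      have := (mem_Icc.mp ht).1
      positivity
    rw [htail t ht, mul_one_div_cancel ht0]
  exact ⟨hwelfare, hrevenue, by rw [hwelfare, hrevenue, div_one]⟩

/-- Tightness of the harmonic-number bound: if `Pr[v ≥ t] = 1/t` for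
all integers `1 ≤ t ≤ V` (equal-revenue distribution truncated at `V`), then
`E[v] = H_V`, the optimal fixed-price revenue `max_{1 ≤ t ≤ V} t·Pr[v ≥ t]` is `1`,
and the ratio of social welfare to optimal fixed-price revenue is exactly `H_V`. -/
theorem stmt3 (V : ℕ) (hV : 1 ≤ V) (f : ℕ → ℝ) (hf0 : ∀ t, 0 ≤ f t)
    (htail : ∀ t ∈ Finset.Icc 1 V, (∑ u ∈ Finset.Icc t V, f u) = 1 / (t:ℝ)) :
    (∑ t ∈ Finset.Icc 1 V, (t:ℝ) * f t) = (∑ i ∈ Finset.Icc 1 V, (1:ℝ)/i) ∧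
    (Finset.Icc 1 V).sup' (Finset.nonempty_Icc.mpr hV)
        (fun t => (t:ℝ) * ∑ u ∈ Finset.Icc t V, f u) = 1 ∧
    (∑ t ∈ Finset.Icc 1 V, (t:ℝ) * f t) /
      (Finset.Icc 1 V).sup' (Finset.nonempty_Icc.mpr hV)
        (fun t => (t:ℝ) * ∑ u ∈ Finset.Icc t V, f u)
      = (∑ i ∈ Finset.Icc 1 V, (1:ℝ)/i) :=
  stmt3_general V hV f htail
end

section
/- Let the second-day valuation conditioned on first-day valuation 2^k be 2^{k+i} with probability 2^{-i} for i = 1,...,N (and 0 otherwise), where N = 2^n. Then the mechanism that charges a buyer with first-day valuation 2^k the full price 2^k on day one and allocates the second-day item for free with probability k/n is incentive compatible: the buyer's expected utility from reporting 2^l, namely (l/n)·E[v²|v¹=2^k] − 2^l = l·2^k − 2^l, is maximized over integers l at l ∈ {k, k+1}. -/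
/-! Reporting `2^l` instead of `2^k` yields the free item with probability `l/n`, worth `l·2^k` in
expectation since every term of the conditional expectation contributes `2^k`. The resulting
utility `U(l) = l·2^k − 2^l` has increments `U(l+1) − U(l) = 2^k − 2^l`, so it rises up to
`l = k`, is flat from `k` to `k + 1`, and falls afterwards; equivalently, the convex map
`l ↦ 2^l` lies above the line through its values at `k` and `k + 1`. -/

open Finset

theorem sum_Icc_inv_pow_mul_pow_add {K : Type*} [DivisionRing K] {a : K} (ha : a ≠ 0) (n k : ℕ) :
    ∑ i ∈ Icc 1 n, (a ^ i)⁻¹ * a ^ (k + i) = n * a ^ k := by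
  have hterm : ∀ i, (a ^ i)⁻¹ * a ^ (k + i) = a ^ k := fun i => by
    rw [add_comm, pow_add, ← mul_assoc, inv_mul_cancel₀ (pow_ne_zero i ha), one_mul]
  simp only [hterm, sum_const, Nat.card_Icc, add_tsub_cancel_right, nsmul_eq_mul]

theorem mul_two_pow_add_two_pow_le (k l : ℕ) : l * 2 ^ k + 2 ^ k ≤ k * 2 ^ k + 2 ^ l := by
  rcases lt_or_ge l k with hlk | hkl
  · have : (l + 1) * 2 ^ k ≤ k * 2 ^ k := Nat.mul_le_mul_right _ hlk
    linarith [Nat.zero_le (2 ^ l)]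
  · obtain ⟨m, rfl⟩ := Nat.exists_eq_add_of_le hkl
    have : (m + 1) * 2 ^ k ≤ 2 ^ m * 2 ^ k := Nat.mul_le_mul_right _ Nat.lt_two_pow_self
    rw [pow_add]
    linarith

/-- Expected utility of a buyer of type `2^k` reporting `2^l`. -/
def utility (k l : ℕ) : ℝ := l * 2 ^ k - 2 ^ l

theorem utility_le_utility_self (k l : ℕ) : utility k l ≤ utility k k := by
  have h : (l : ℝ) * 2 ^ k + 2 ^ k ≤ k * 2 ^ k + 2 ^ l := by
    exact_mod_cast mul_two_pow_add_two_pow_le k l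
  unfold utility
  linarith

theorem utility_succ_self (k : ℕ) : utility k (k + 1) = utility k k := by
  unfold utility
  push_cast
  ring

theorem stmt4_general (n k : ℕ) (hn : 1 ≤ n) :
    (∀ l : ℕ, 1 ≤ l →
      ((l:ℝ)/n) * (∑ i ∈ Finset.Icc 1 n, ((2:ℝ)^i)⁻¹ * 2^(k+i)) - 2^l
        = (l:ℝ) * 2^k - 2^l) ∧
    (∀ l : ℕ, 1 ≤ l → (l:ℝ) * 2^k - 2^l ≤ (k:ℝ) * 2^k - 2^k) ∧
    (∀ l : ℕ, 1 ≤ l → (l:ℝ) * 2^k - 2^l ≤ ((k:ℝ)+1) * 2^k - 2^(k+1)) := by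
  have hn0 : (n : ℝ) ≠ 0 := by positivity
  refine ⟨fun l _ => ?_, fun l _ => utility_le_utility_self k l, fun l _ => ?_⟩
  · rw [sum_Icc_inv_pow_mul_pow_add two_ne_zero]
    field_simp
  · have h := utility_le_utility_self k l
    rw [← utility_succ_self] at h
    simpa [utility] using h

/-- With the second-day valuation conditioned on first-day valuation
`2^k` being `2^{k+i}` with probability `2^{-i}` (so that the conditional
expectation is `n·2^k`), the mechanism charging full price `2^k` on day one and
giving the second item free with probability `k/n` is incentive compatible: the
expected utility of reporting `2^l`, namely
`(l/n)·E[v²|v¹=2^k] − 2^l = l·2^k − 2^l`, is maximized over integers `l ≥ 1`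
at `l ∈ {k, k+1}`. -/
theorem stmt4 (n k : ℕ) (hn : 1 ≤ n) (hk : 1 ≤ k) (hkn : k ≤ n) :
    (∀ l : ℕ, 1 ≤ l →
      ((l:ℝ)/n) * (∑ i ∈ Finset.Icc 1 n, ((2:ℝ)^i)⁻¹ * 2^(k+i)) - 2^l
        = (l:ℝ) * 2^k - 2^l) ∧
    (∀ l : ℕ, 1 ≤ l → (l:ℝ) * 2^k - 2^l ≤ (k:ℝ) * 2^k - 2^k) ∧
    (∀ l : ℕ, 1 ≤ l → (l:ℝ) * 2^k - 2^l ≤ ((k:ℝ)+1) * 2^k - 2^(k+1)) :=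
  stmt4_general n k hn
end
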